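/- arXiv:2409.14885 — 16 statements merged into one kernel-verified Lean document; each statement's English description precedes it below -/
import Mathlib

section
/- Suppose max_{θ} S(θ) − min_{θ} S(θ) < 2Δ and 2Δ < min_{θ} S(θ). If q̄ : Θ → ℝ solves the Bellman equation, then for every state θ one has (1/2)·S(θ) < q̄(θ) < S(θ); that is, the equilibrium is interior. -/
/-- Under the condition `max S − min S < 2Δ < min S`, any solution of the Bellman
equation is interior: `(1/2)·S(θ) < q̄(θ) < S(θ)` in every state. -/
theorem bellman_solution_interior {Θ : Type*} [Fintype Θ] [Nonempty Θ]
    (𝓜 : Finset (Θ → Θ → ℝ)) (h𝓜 : 𝓜.Nonempty)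
    (hker : ∀ β ∈ 𝓜, (∀ θ θ', 0 ≤ β θ θ') ∧ ∀ θ, ∑ θ', β θ θ' = 1)
    (S : Θ → ℝ) (Δ : ℝ)
    (hcond1 : (Finset.univ.sup' Finset.univ_nonempty S) -
      (Finset.univ.inf' Finset.univ_nonempty S) < 2 * Δ)
    (hcond2 : 2 * Δ < Finset.univ.inf' Finset.univ_nonempty S)
    (q : Θ → ℝ)
    (hq : ∀ θ, q θ =
      (1 / 2) * (S θ - Δ + 𝓜.inf' h𝓜 fun β => ∑ θ', β θ θ' * q θ')) :
    ∀ θ, (1 / 2) * S θ < q θ ∧ q θ < S θ := by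
  set Mq := Finset.univ.sup' Finset.univ_nonempty q with hMq
  set mq := Finset.univ.inf' Finset.univ_nonempty q with hmq
  set MS := Finset.univ.sup' Finset.univ_nonempty S with hMS
  set mS := Finset.univ.inf' Finset.univ_nonempty S with hmS
  obtain ⟨θM, _, hθM⟩ := Finset.exists_mem_eq_sup' Finset.univ_nonempty q
  obtain ⟨θm, _, hθm⟩ := Finset.exists_mem_eq_inf' Finset.univ_nonempty q
  have hub : ∀ θ, (𝓜.inf' h𝓜 fun β => ∑ θ', β θ θ' * q θ') ≤ Mq := by
    intro θ
    obtain ⟨β, hβ⟩ := h𝓜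
    refine le_trans (Finset.inf'_le _ hβ) ?_
    obtain ⟨hpos, hsum⟩ := hker β hβ
    calc ∑ θ', β θ θ' * q θ' ≤ ∑ θ', β θ θ' * Mq :=
          Finset.sum_le_sum fun i _ =>
            mul_le_mul_of_nonneg_left (Finset.le_sup' q (Finset.mem_univ i)) (hpos θ i)
      _ = Mq := by rw [← Finset.sum_mul, hsum θ, one_mul]
  have hlb : ∀ θ, mq ≤ (𝓜.inf' h𝓜 fun β => ∑ θ', β θ θ' * q θ') := by
    intro θ
    apply Finset.le_inf'
    intro β hβ
    obtain ⟨hpos, hsum⟩ := hker β hβ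
    calc mq = ∑ θ', β θ θ' * mq := by rw [← Finset.sum_mul, hsum θ, one_mul]
      _ ≤ ∑ θ', β θ θ' * q θ' :=
          Finset.sum_le_sum fun i _ =>
            mul_le_mul_of_nonneg_left (Finset.inf'_le q (Finset.mem_univ i)) (hpos θ i)
  have hMqle : Mq ≤ MS - Δ := by
    have h1 := hq θM
    have h2 := hub θM
    have h3 : S θM ≤ MS := Finset.le_sup' S (Finset.mem_univ θM)
    rw [← hθM] at h1
    linarith
  have hmqge : mS - Δ ≤ mq := by
    have h1 := hq θm
    have h2 := hlb θm
    have h3 : mS ≤ S θm := Finset.inf'_le S (Finset.mem_univ θm)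
    rw [← hθm] at h1
    linarith
  intro θ
  have h1 := hq θ
  have h2 := hub θ
  have h3 := hlb θ
  have h4 : mS ≤ S θ := Finset.inf'_le S (Finset.mem_univ θ)
  have h5 : S θ ≤ MS := Finset.le_sup' S (Finset.mem_univ θ)
  constructor <;> linarith
end

section
/- Let 𝓜 and 𝓜' be nonempty finite sets of transition kernels on Θ with 𝓜 ⊆ 𝓜', let q̄ be the unique solution of the Bellman equation for 𝓜 and q̄' the unique solution for 𝓜'. Then q̄'(θ) ≤ q̄(θ) for every state θ; that is, expanding the set of cognitive types weakly decreases the expected add-on in every state. -/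
/-- Expanding the set of cognitive types weakly decreases the expected add-on
in every state. -/
theorem bellman_monotone_in_types {Θ : Type*} [Fintype Θ] [Nonempty Θ]
    (𝓜 𝓜' : Finset (Θ → Θ → ℝ)) (h𝓜 : 𝓜.Nonempty) (h𝓜' : 𝓜'.Nonempty)
    (hsub : 𝓜 ⊆ 𝓜')
    (hker : ∀ β ∈ 𝓜', (∀ θ θ', 0 ≤ β θ θ') ∧ ∀ θ, ∑ θ', β θ θ' = 1)
    (S : Θ → ℝ) (Δ : ℝ) (q q' : Θ → ℝ)
    (hq : ∀ θ, q θ =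
      (1 / 2) * (S θ - Δ + 𝓜.inf' h𝓜 fun β => ∑ θ', β θ θ' * q θ'))
    (hq' : ∀ θ, q' θ =
      (1 / 2) * (S θ - Δ + 𝓜'.inf' h𝓜' fun β => ∑ θ', β θ θ' * q' θ')) :
    ∀ θ, q' θ ≤ q θ := by
  obtain ⟨θ₀, hθ₀⟩ := Finite.exists_max (fun θ => q' θ - q θ)
  set M := q' θ₀ - q θ₀ with hM
  have h1 : 𝓜'.inf' h𝓜' (fun β => ∑ θ', β θ₀ θ' * q' θ') ≤
      𝓜.inf' h𝓜 (fun β => ∑ θ', β θ₀ θ' * q θ') + M := by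
    obtain ⟨β, hβ, hβeq⟩ := Finset.exists_mem_eq_inf' h𝓜 (fun β => ∑ θ', β θ₀ θ' * q θ')
    have hβ' := hker β (hsub hβ)
    calc 𝓜'.inf' h𝓜' (fun β => ∑ θ', β θ₀ θ' * q' θ')
        ≤ ∑ θ', β θ₀ θ' * q' θ' := Finset.inf'_le _ (hsub hβ)
      _ ≤ ∑ θ', β θ₀ θ' * (q θ' + M) := by
          apply Finset.sum_le_sum
          intro i _
          exact mul_le_mul_of_nonneg_left (by have := hθ₀ i; simp only [hM]; linarith)
            (hβ'.1 θ₀ i)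
      _ = ∑ θ', β θ₀ θ' * q θ' + (∑ θ', β θ₀ θ') * M := by
          rw [Finset.sum_mul]
          rw [← Finset.sum_add_distrib]
          congr 1; ext i; ring
      _ = 𝓜.inf' h𝓜 (fun β => ∑ θ', β θ₀ θ' * q θ') + M := by
          rw [hβ'.2 θ₀, one_mul, hβeq]
  have hM0 : M ≤ 0 := by
    have e1 := hq θ₀
    have e2 := hq' θ₀
    have : M ≤ (1/2) * M := by rw [hM]; linarith
    linarith
  intro θ
  have := hθ₀ θ
  linarith
end

section
/- Let 𝓜 and 𝓜' be nonempty finite sets of transition kernels on Θ with 𝓜 ⊆ 𝓜', let q̄ be the unique solution of the Bellman equation for 𝓜 and q̄' the unique solution for 𝓜', and fix c ∈ ℝ. Then the headline price weakly increases in every state: S(θ) + c − 2·q̄'(θ) ≥ S(θ) + c − 2·q̄(θ) for every θ. -/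
/-- Expanding the set of cognitive types weakly increases the headline price
`h(θ) = S(θ) + c − 2·q̄(θ)` in every state. -/
theorem bellman_price_monotone_in_types {Θ : Type*} [Fintype Θ] [Nonempty Θ]
    (𝓜 𝓜' : Finset (Θ → Θ → ℝ)) (h𝓜 : 𝓜.Nonempty) (h𝓜' : 𝓜'.Nonempty)
    (hsub : 𝓜 ⊆ 𝓜')
    (hker : ∀ β ∈ 𝓜', (∀ θ θ', 0 ≤ β θ θ') ∧ ∀ θ, ∑ θ', β θ θ' = 1)
    (S : Θ → ℝ) (Δ : ℝ) (c : ℝ) (q q' : Θ → ℝ)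
    (hq : ∀ θ, q θ =
      (1 / 2) * (S θ - Δ + 𝓜.inf' h𝓜 fun β => ∑ θ', β θ θ' * q θ'))
    (hq' : ∀ θ, q' θ =
      (1 / 2) * (S θ - Δ + 𝓜'.inf' h𝓜' fun β => ∑ θ', β θ θ' * q' θ')) :
    ∀ θ, S θ + c - 2 * q' θ ≥ S θ + c - 2 * q θ := by
  -- It suffices to show q' θ ≤ q θ for all θ.
  obtain ⟨θ₀, -, hmax⟩ := Finset.exists_max_image Finset.univ (fun θ => q' θ - q θ)
    ⟨Classical.arbitrary Θ, Finset.mem_univ _⟩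
  set M : ℝ := q' θ₀ - q θ₀ with hM
  have hble : ∀ θ, q' θ - q θ ≤ M := fun θ => hmax θ (Finset.mem_univ θ)
  -- pick minimizer β for q at θ₀
  obtain ⟨β, hβmem, hβeq⟩ := Finset.exists_mem_eq_inf' h𝓜 (fun β => ∑ θ', β θ₀ θ' * q θ')
  have hβ := hker β (hsub hβmem)
  have key : (𝓜'.inf' h𝓜' fun b => ∑ θ', b θ₀ θ' * q' θ') ≤
      (𝓜.inf' h𝓜 fun b => ∑ θ', b θ₀ θ' * q θ') + M := by
    calc (𝓜'.inf' h𝓜' fun b => ∑ θ', b θ₀ θ' * q' θ') ≤ ∑ θ', β θ₀ θ' * q' θ' :=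
          Finset.inf'_le _ (hsub hβmem)
      _ ≤ ∑ θ', β θ₀ θ' * (q θ' + M) := by
          apply Finset.sum_le_sum
          intro i _
          exact mul_le_mul_of_nonneg_left (by linarith [hble i]) (hβ.1 θ₀ i)
      _ = (∑ θ', β θ₀ θ' * q θ') + M := by
          simp [mul_add, Finset.sum_add_distrib, ← Finset.sum_mul, hβ.2 θ₀]
      _ = (𝓜.inf' h𝓜 fun b => ∑ θ', b θ₀ θ' * q θ') + M := by rw [hβeq]
  have hM0 : M ≤ 0 := by
    have h1 := hq θ₀
    have h2 := hq' θ₀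
    have : M ≤ (1/2) * M := by
      rw [hM]; nlinarith [key]
    linarith
  intro θ
  have := hble θ
  have : q' θ ≤ q θ := by linarith
  linarith
end

section
/- Let 𝓜 and 𝓜' be nonempty finite sets of transition kernels on Θ with 𝓜 ⊆ 𝓜', suppose S(θ) > 0 for every θ, let q̄ be the unique solution of the Bellman equation for 𝓜 and q̄' the unique solution for 𝓜'. Then the marginal firm type weakly decreases in every state: 2·q̄'(θ)/S(θ) − 1 ≤ 2·q̄(θ)/S(θ) − 1 for every θ; equivalently, the volume of trade 1 − π*(θ) weakly increases in every state. -/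
/-- Expanding the set of cognitive types weakly decreases the marginal firm type
`π*(θ) = 2·q̄(θ)/S(θ) − 1` in every state; equivalently, the volume of trade
`1 − π*(θ)` weakly increases in every state. -/
theorem bellman_marginal_type_monotone {Θ : Type*} [Fintype Θ] [Nonempty Θ]
    (𝓜 𝓜' : Finset (Θ → Θ → ℝ)) (h𝓜 : 𝓜.Nonempty) (h𝓜' : 𝓜'.Nonempty)
    (hsub : 𝓜 ⊆ 𝓜')
    (hker : ∀ β ∈ 𝓜', (∀ θ θ', 0 ≤ β θ θ') ∧ ∀ θ, ∑ θ', β θ θ' = 1)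
    (S : Θ → ℝ) (hS : ∀ θ, 0 < S θ) (Δ : ℝ) (q q' : Θ → ℝ)
    (hq : ∀ θ, q θ =
      (1 / 2) * (S θ - Δ + 𝓜.inf' h𝓜 fun β => ∑ θ', β θ θ' * q θ'))
    (hq' : ∀ θ, q' θ =
      (1 / 2) * (S θ - Δ + 𝓜'.inf' h𝓜' fun β => ∑ θ', β θ θ' * q' θ')) :
    ∀ θ, 2 * q' θ / S θ - 1 ≤ 2 * q θ / S θ - 1 ∧
      1 - (2 * q' θ / S θ - 1) ≥ 1 - (2 * q θ / S θ - 1) := by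
  have key : ∀ θ, q' θ ≤ q θ := by
    set M : ℝ := Finset.univ.sup' Finset.univ_nonempty (fun θ => q' θ - q θ) with hM
    obtain ⟨θ0, -, hθ0⟩ := Finset.exists_mem_eq_sup' Finset.univ_nonempty
      (fun θ => q' θ - q θ)
    have hle : ∀ θ, q' θ - q θ ≤ M := fun θ =>
      hM ▸ Finset.le_sup' (fun θ => q' θ - q θ) (Finset.mem_univ θ)
    obtain ⟨β, hβ𝓜, hβeq⟩ := Finset.exists_mem_eq_inf' h𝓜
      (fun β => ∑ θ', β θ0 θ' * q θ')
    have hβ𝓜' : β ∈ 𝓜' := hsub hβ𝓜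
    obtain ⟨hβpos, hβsum⟩ := hker β hβ𝓜'
    have h1 : (𝓜'.inf' h𝓜' fun β => ∑ θ', β θ0 θ' * q' θ') ≤
        ∑ θ', β θ0 θ' * q' θ' := Finset.inf'_le _ hβ𝓜'
    have h2 : ∑ θ', β θ0 θ' * q' θ' - ∑ θ', β θ0 θ' * q θ' ≤ M := by
      rw [← Finset.sum_sub_distrib]
      calc ∑ θ', (β θ0 θ' * q' θ' - β θ0 θ' * q θ')
          ≤ ∑ θ', β θ0 θ' * M := by
            apply Finset.sum_le_sum
            intro i _
            rw [← mul_sub]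
            exact mul_le_mul_of_nonneg_left (hle i) (hβpos θ0 i)
        _ = M := by rw [← Finset.sum_mul, hβsum θ0, one_mul]
    have hdiff : q' θ0 - q θ0 ≤ (1 / 2) * M := by
      rw [hq θ0, hq' θ0]
      linarith [hβeq, h1, h2]
    have hM0 : M ≤ 0 := by
      have hMeq : M = q' θ0 - q θ0 := hθ0
      linarith
    intro θ
    linarith [hle θ, hM0]
  intro θ
  have h := key θ
  have hs := hS θ
  have hdiv : 2 * q' θ / S θ ≤ 2 * q θ / S θ :=
    div_le_div_of_nonneg_right (by linarith) hs.le
  constructor <;> linarith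
end

section
/- Suppose the identity kernel belongs to 𝓜. If q̄ : Θ → ℝ solves the Bellman equation, then q̄(θ) ≤ S(θ) − Δ for every state θ; equivalently, the net payoff of a trading consumer, Δ − S(θ) + q̄(θ), is weakly negative in every state. -/
/-- If the identity kernel (rational expectations) belongs to `𝓜`, then any
solution of the Bellman equation satisfies `q̄(θ) ≤ S(θ) − Δ` in every state;
equivalently, the net payoff `Δ − S(θ) + q̄(θ)` of a trading consumer is weakly
negative in every state. -/
theorem bellman_rational_upper_bound {Θ : Type*} [Fintype Θ] [Nonempty Θ]
    [DecidableEq Θ]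
    (𝓜 : Finset (Θ → Θ → ℝ)) (h𝓜 : 𝓜.Nonempty)
    (hker : ∀ β ∈ 𝓜, (∀ θ θ', 0 ≤ β θ θ') ∧ ∀ θ, ∑ θ', β θ θ' = 1)
    (hid : (fun θ θ' => if θ = θ' then (1 : ℝ) else 0) ∈ 𝓜)
    (S : Θ → ℝ) (Δ : ℝ) (q : Θ → ℝ)
    (hq : ∀ θ, q θ =
      (1 / 2) * (S θ - Δ + 𝓜.inf' h𝓜 fun β => ∑ θ', β θ θ' * q θ')) :
    ∀ θ, q θ ≤ S θ - Δ ∧ Δ - S θ + q θ ≤ 0 := by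
  intro θ
  have hle : (𝓜.inf' h𝓜 fun β => ∑ θ', β θ θ' * q θ') ≤ q θ := by
    have := Finset.inf'_le (fun β => ∑ θ', β θ θ' * q θ') hid
    simp [ite_mul, Finset.sum_ite_eq] at this
    exact this
  have := hq θ
  constructor <;> linarith
end

section
/- Suppose the identity kernel belongs to both 𝓜 and 𝓜', 𝓜 ⊆ 𝓜', Δ ≥ 0, and S(θ) > 0 for every θ. Let q̄ and q̄' be the unique solutions of the Bellman equation for 𝓜 and 𝓜' respectively. Then for every state θ, the consumers' welfare loss weakly increases: (1 − π*'(θ))·(S(θ) − Δ − q̄'(θ)) ≥ (1 − π*(θ))·(S(θ) − Δ − q̄(θ)) ≥ 0, where π*(θ) = 2·q̄(θ)/S(θ) − 1 and π*'(θ) = 2·q̄'(θ)/S(θ) − 1. -/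
/-- When a rational type is present, expanding the set of cognitive types weakly
increases the consumers' welfare loss `(1 − π*(θ))·(S(θ) − Δ − q̄(θ)) ≥ 0` in
every state, where `π*(θ) = 2·q̄(θ)/S(θ) − 1`. -/
theorem bellman_welfare_loss_monotone {Θ : Type*} [Fintype Θ] [Nonempty Θ]
    [DecidableEq Θ]
    (𝓜 𝓜' : Finset (Θ → Θ → ℝ)) (h𝓜 : 𝓜.Nonempty) (h𝓜' : 𝓜'.Nonempty)
    (hsub : 𝓜 ⊆ 𝓜')
    (hker : ∀ β ∈ 𝓜', (∀ θ θ', 0 ≤ β θ θ') ∧ ∀ θ, ∑ θ', β θ θ' = 1)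
    (hid : (fun θ θ' => if θ = θ' then (1 : ℝ) else 0) ∈ 𝓜)
    (hid' : (fun θ θ' => if θ = θ' then (1 : ℝ) else 0) ∈ 𝓜')
    (Δ : ℝ) (hΔ : 0 ≤ Δ) (S : Θ → ℝ) (hS : ∀ θ, 0 < S θ) (q q' : Θ → ℝ)
    (hq : ∀ θ, q θ =
      (1 / 2) * (S θ - Δ + 𝓜.inf' h𝓜 fun β => ∑ θ', β θ θ' * q θ'))
    (hq' : ∀ θ, q' θ =
      (1 / 2) * (S θ - Δ + 𝓜'.inf' h𝓜' fun β => ∑ θ', β θ θ' * q' θ')) :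
    ∀ θ, (1 - (2 * q' θ / S θ - 1)) * (S θ - Δ - q' θ) ≥
        (1 - (2 * q θ / S θ - 1)) * (S θ - Δ - q θ) ∧
      (1 - (2 * q θ / S θ - 1)) * (S θ - Δ - q θ) ≥ 0 := by
  -- identity-kernel sum
  have idsum : ∀ (f : Θ → ℝ) θ,
      (∑ θ', (if θ = θ' then (1 : ℝ) else 0) * f θ') = f θ := by
    intro f θ
    simp [ite_mul]
  -- upper bound for q
  have hub : ∀ θ, q θ ≤ S θ - Δ := by
    intro θ
    have h1 : (𝓜.inf' h𝓜 fun β => ∑ θ', β θ θ' * q θ') ≤ q θ := by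
      have h0 : (𝓜.inf' h𝓜 fun β => ∑ θ', β θ θ' * q θ') ≤
          ∑ θ', (if θ = θ' then (1 : ℝ) else 0) * q θ' := Finset.inf'_le _ hid
      rwa [idsum q θ] at h0
    have := hq θ
    linarith
  -- upper bound for q'
  have hub' : ∀ θ, q' θ ≤ S θ - Δ := by
    intro θ
    have h1 : (𝓜'.inf' h𝓜' fun β => ∑ θ', β θ θ' * q' θ') ≤ q' θ := by
      have h0 : (𝓜'.inf' h𝓜' fun β => ∑ θ', β θ θ' * q' θ') ≤
          ∑ θ', (if θ = θ' then (1 : ℝ) else 0) * q' θ' := Finset.inf'_le _ hid'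
      rwa [idsum q' θ] at h0
    have := hq' θ
    linarith
  -- q' ≤ q
  have hle : ∀ θ, q' θ ≤ q θ := by
    obtain ⟨θ₀, -, hmax⟩ := Finset.exists_max_image Finset.univ
      (fun θ => q' θ - q θ) Finset.univ_nonempty
    set M := q' θ₀ - q θ₀ with hM
    have hmax' : ∀ θ, q' θ - q θ ≤ M := fun θ => hmax θ (Finset.mem_univ θ)
    have hMle : M ≤ 0 := by
      obtain ⟨β, hβ, hβmin⟩ := Finset.exists_mem_eq_inf' h𝓜
        (fun β => ∑ θ', β θ₀ θ' * q θ')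
      have hβ' : β ∈ 𝓜' := hsub hβ
      have h1 : (𝓜'.inf' h𝓜' fun β => ∑ θ', β θ₀ θ' * q' θ') ≤
          ∑ θ', β θ₀ θ' * q' θ' :=
        Finset.inf'_le _ hβ'
      have h2 : (∑ θ', β θ₀ θ' * q' θ') ≤ ∑ θ', β θ₀ θ' * (q θ' + M) := by
        refine Finset.sum_le_sum fun i _ => ?_
        exact mul_le_mul_of_nonneg_left (by linarith [hmax' i])
          ((hker β hβ').1 θ₀ i)
      have h3 : (∑ θ', β θ₀ θ' * (q θ' + M)) =
          (∑ θ', β θ₀ θ' * q θ') + M := by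
        simp only [mul_add, Finset.sum_add_distrib, ← Finset.sum_mul,
          (hker β hβ').2 θ₀, one_mul]
      have hqθ := hq θ₀
      have hq'θ := hq' θ₀
      rw [hβmin] at hqθ
      have : q' θ₀ ≤ (1 / 2) * (S θ₀ - Δ + ((∑ θ', β θ₀ θ' * q θ') + M)) := by
        rw [hq'θ]
        linarith
      have : M ≤ M / 2 := by
        rw [hM]
        linarith
      linarith
    intro θ
    linarith [hmax' θ]
  -- algebra
  intro θ
  have hSθ := hS θ
  have key : ∀ x : ℝ, (1 - (2 * x / S θ - 1)) * (S θ - Δ - x) =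
      2 * (S θ - x) * (S θ - Δ - x) / S θ := by
    intro x
    rw [eq_div_iff hSθ.ne']
    field_simp
    ring
  rw [key, key]
  have h1 := hub θ
  have h2 := hub' θ
  have h3 := hle θ
  constructor
  · rw [ge_iff_le, div_le_div_iff₀ hSθ hSθ]
    have e1 : 0 ≤ (S θ - q' θ) * (q θ - q' θ) * S θ :=
      mul_nonneg (mul_nonneg (by linarith) (by linarith)) hSθ.le
    have e2 : 0 ≤ (q θ - q' θ) * (S θ - Δ - q θ) * S θ :=
      mul_nonneg (mul_nonneg (by linarith) (by linarith)) hSθ.le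
    nlinarith [e1, e2]
  · apply div_nonneg _ hSθ.le
    nlinarith [h1, hΔ]
end

section
/- Suppose 𝓜 = {β} is a singleton and μ is a probability vector on Θ invariant under β. If q̄ : Θ → ℝ solves the Bellman equation, then the expected add-on equals its rational-expectations level: ∑_θ μ(θ)·q̄(θ) = (∑_θ μ(θ)·S(θ)) − Δ. -/
/-- When `𝓜 = {β}` is a singleton and `μ` is an invariant probability vector of
`β`, the expected add-on in equilibrium equals its rational-expectations level:
`∑ μ·q̄ = ∑ μ·S − Δ`. -/
theorem bellman_singleton_expected_addon {Θ : Type*} [Fintype Θ] [Nonempty Θ]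
    (β : Θ → Θ → ℝ)
    (hβ : (∀ θ θ', 0 ≤ β θ θ') ∧ ∀ θ, ∑ θ', β θ θ' = 1)
    (𝓜 : Finset (Θ → Θ → ℝ)) (h𝓜 : 𝓜.Nonempty) (hM : 𝓜 = {β})
    (μ : Θ → ℝ) (hμ0 : ∀ θ, 0 ≤ μ θ) (hμ1 : ∑ θ, μ θ = 1)
    (hinv : ∀ θ', ∑ θ, μ θ * β θ θ' = μ θ')
    (S : Θ → ℝ) (Δ : ℝ) (q : Θ → ℝ)
    (hq : ∀ θ, q θ =
      (1 / 2) * (S θ - Δ + 𝓜.inf' h𝓜 fun b => ∑ θ', b θ θ' * q θ')) :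
    ∑ θ, μ θ * q θ = (∑ θ, μ θ * S θ) - Δ := by
  have hq' : ∀ θ, q θ = (1 / 2) * (S θ - Δ + ∑ θ', β θ θ' * q θ') := by
    intro θ
    subst hM
    simpa using hq θ
  have key : ∑ θ, μ θ * (∑ θ', β θ θ' * q θ') = ∑ θ, μ θ * q θ := by
    calc ∑ θ, μ θ * (∑ θ', β θ θ' * q θ')
        = ∑ θ, ∑ θ', μ θ * β θ θ' * q θ' := by
          simp [Finset.mul_sum, mul_assoc]
      _ = ∑ θ', (∑ θ, μ θ * β θ θ') * q θ' := by
          rw [Finset.sum_comm]; simp [Finset.sum_mul]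
      _ = ∑ θ', μ θ' * q θ' := by simp [hinv]
  have hsum : ∑ θ, μ θ * q θ
      = (1/2) * ((∑ θ, μ θ * S θ) - Δ + ∑ θ, μ θ * q θ) := by
    calc ∑ θ, μ θ * q θ
        = ∑ θ, μ θ * ((1 / 2) * (S θ - Δ + ∑ θ', β θ θ' * q θ')) := by
          exact Finset.sum_congr rfl fun θ _ => by rw [← hq' θ]
      _ = (1/2) * ((∑ θ, μ θ * S θ) - (∑ θ, μ θ) * Δ
            + ∑ θ, μ θ * (∑ θ', β θ θ' * q θ')) := by
          rw [Finset.sum_mul]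
          rw [← Finset.sum_sub_distrib, ← Finset.sum_add_distrib, Finset.mul_sum]
          congr 1; funext θ; ring
      _ = (1/2) * ((∑ θ, μ θ * S θ) - Δ + ∑ θ, μ θ * q θ) := by
          rw [hμ1, key, one_mul]
  linarith
end

section
/- Let μ be a probability vector on Θ and let q̄ : Θ → ℝ solve the Bellman equation. Write S̄ = ∑_θ μ(θ)·S(θ). (i) If some kernel β₀ ∈ 𝓜 leaves μ invariant, then ∑_θ μ(θ)·q̄(θ) ≤ S̄ − Δ. (ii) If 2Δ < min_θ S(θ), then ∑_θ μ(θ)·q̄(θ) ≥ (1/2)·S̄. Hence the expected add-on in interior equilibrium lies in the interval [(1/2)·S̄, S̄ − Δ]. -/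
/-- The expected add-on in interior equilibrium lies in `[(1/2)·S̄, S̄ − Δ]`:
(i) if some kernel in `𝓜` leaves `μ` invariant, then `∑ μ·q̄ ≤ S̄ − Δ`;
(ii) if `2Δ < min S`, then `∑ μ·q̄ ≥ (1/2)·S̄`. -/
theorem bellman_expected_addon_bounds {Θ : Type*} [Fintype Θ] [Nonempty Θ]
    (𝓜 : Finset (Θ → Θ → ℝ)) (h𝓜 : 𝓜.Nonempty)
    (hker : ∀ β ∈ 𝓜, (∀ θ θ', 0 ≤ β θ θ') ∧ ∀ θ, ∑ θ', β θ θ' = 1)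
    (μ : Θ → ℝ) (hμ0 : ∀ θ, 0 ≤ μ θ) (hμ1 : ∑ θ, μ θ = 1)
    (S : Θ → ℝ) (Δ : ℝ) (q : Θ → ℝ)
    (hq : ∀ θ, q θ =
      (1 / 2) * (S θ - Δ + 𝓜.inf' h𝓜 fun β => ∑ θ', β θ θ' * q θ'))
    (Sbar : ℝ) (hSbar : Sbar = ∑ θ, μ θ * S θ) :
    ((∃ β₀ ∈ 𝓜, ∀ θ', ∑ θ, μ θ * β₀ θ θ' = μ θ') →
      ∑ θ, μ θ * q θ ≤ Sbar - Δ) ∧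
    (2 * Δ < Finset.univ.inf' Finset.univ_nonempty S →
      (1 / 2) * Sbar ≤ ∑ θ, μ θ * q θ) := by
  constructor
  · rintro ⟨β₀, hβ₀, hinv⟩
    have h1 : ∀ θ, q θ ≤ (1/2) * (S θ - Δ + ∑ θ', β₀ θ θ' * q θ') := by
      intro θ
      rw [hq θ]
      have := Finset.inf'_le (fun β => ∑ θ', β θ θ' * q θ') hβ₀
      linarith
    have h2 : ∑ θ, μ θ * q θ ≤
        ∑ θ, μ θ * ((1/2) * (S θ - Δ + ∑ θ', β₀ θ θ' * q θ')) :=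
      Finset.sum_le_sum fun θ _ => mul_le_mul_of_nonneg_left (h1 θ) (hμ0 θ)
    have hswap : ∑ θ, μ θ * ∑ θ', β₀ θ θ' * q θ' = ∑ θ, μ θ * q θ := by
      simp_rw [Finset.mul_sum]
      rw [Finset.sum_comm]
      calc ∑ θ', ∑ θ, μ θ * (β₀ θ θ' * q θ')
          = ∑ θ', (∑ θ, μ θ * β₀ θ θ') * q θ' := by
            simp_rw [Finset.sum_mul, mul_assoc]
        _ = ∑ θ', μ θ' * q θ' := by simp_rw [hinv]
    have h3 : ∑ θ, μ θ * ((1/2) * (S θ - Δ + ∑ θ', β₀ θ θ' * q θ'))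
        = (1/2) * ((∑ θ, μ θ * S θ) - Δ * (∑ θ, μ θ) + ∑ θ, μ θ * q θ) := by
      have he : ∀ θ, μ θ * ((1/2) * (S θ - Δ + ∑ θ', β₀ θ θ' * q θ'))
          = (1/2)*(μ θ * S θ) - (1/2)*(Δ * μ θ)
            + (1/2)*(μ θ * ∑ θ', β₀ θ θ' * q θ') := fun θ => by ring
      rw [← hswap]
      simp_rw [he, Finset.sum_add_distrib, Finset.sum_sub_distrib,
        ← Finset.mul_sum]
      ring
    rw [h3, hμ1] at h2
    rw [hSbar]
    linarith
  · intro hΔ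
    set m := Finset.univ.inf' Finset.univ_nonempty q with hm
    have hmle : ∀ θ, m ≤ q θ := fun θ => Finset.inf'_le q (Finset.mem_univ θ)
    have hinfm : ∀ β ∈ 𝓜, ∀ θ, m ≤ ∑ θ', β θ θ' * q θ' := by
      intro β hβ θ
      calc m = ∑ θ', β θ θ' * m := by
              rw [← Finset.sum_mul, (hker β hβ).2 θ, one_mul]
        _ ≤ ∑ θ', β θ θ' * q θ' :=
          Finset.sum_le_sum fun θ' _ =>
            mul_le_mul_of_nonneg_left (hmle θ') ((hker β hβ).1 θ θ')
    have hinf : ∀ θ, m ≤ 𝓜.inf' h𝓜 fun β => ∑ θ', β θ θ' * q θ' := by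
      intro θ
      exact Finset.le_inf' _ _ fun β hβ => hinfm β hβ θ
    obtain ⟨θs, _, hθs⟩ := Finset.exists_mem_eq_inf' Finset.univ_nonempty q
    have hSmin : ∀ θ, Finset.univ.inf' Finset.univ_nonempty S ≤ S θ :=
      fun θ => Finset.inf'_le S (Finset.mem_univ θ)
    have hmS : S θs - Δ ≤ m := by
      have hmq : m = q θs := hθs
      have h1 := hq θs
      have h2 := hinf θs
      linarith
    have hmΔ : Δ ≤ m := by have := hSmin θs; linarith
    have hpt : ∀ θ, (1/2) * S θ ≤ q θ := by
      intro θ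
      have := hq θ
      have h2 := hinf θ
      linarith
    rw [hSbar, Finset.mul_sum]
    refine Finset.sum_le_sum fun θ _ => ?_
    calc (1/2) * (μ θ * S θ) = μ θ * ((1/2) * S θ) := by ring
      _ ≤ μ θ * q θ := mul_le_mul_of_nonneg_left (hpt θ) (hμ0 θ)
end

section
/- Let μ be a probability vector on Θ such that some kernel β₀ ∈ 𝓜 leaves μ invariant, let q̄ : Θ → ℝ solve the Bellman equation, fix c ∈ ℝ, set v* = c + Δ, and define h(θ) = S(θ) + c − 2·q̄(θ). Then the expected headline price is weakly above its rational-expectations level: ∑_θ μ(θ)·h(θ) ≥ v* + Δ − ∑_θ μ(θ)·S(θ). -/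
/-- The expected headline price in interior equilibrium is weakly above its
rational-expectations level `v* + Δ − S̄`, where `v* = c + Δ` and
`h(θ) = S(θ) + c − 2·q̄(θ)`. -/
theorem bellman_expected_price_above_REE {Θ : Type*} [Fintype Θ] [Nonempty Θ]
    (𝓜 : Finset (Θ → Θ → ℝ)) (h𝓜 : 𝓜.Nonempty)
    (hker : ∀ β ∈ 𝓜, (∀ θ θ', 0 ≤ β θ θ') ∧ ∀ θ, ∑ θ', β θ θ' = 1)
    (μ : Θ → ℝ) (hμ0 : ∀ θ, 0 ≤ μ θ) (hμ1 : ∑ θ, μ θ = 1)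
    (hinv : ∃ β₀ ∈ 𝓜, ∀ θ', ∑ θ, μ θ * β₀ θ θ' = μ θ')
    (S : Θ → ℝ) (Δ c vstar : ℝ) (hv : vstar = c + Δ)
    (q : Θ → ℝ)
    (hq : ∀ θ, q θ =
      (1 / 2) * (S θ - Δ + 𝓜.inf' h𝓜 fun β => ∑ θ', β θ θ' * q θ'))
    (h : Θ → ℝ) (hh : ∀ θ, h θ = S θ + c - 2 * q θ) :
    ∑ θ, μ θ * h θ ≥ vstar + Δ - ∑ θ, μ θ * S θ := by
  obtain ⟨β₀, hβ₀, hinv'⟩ := hinv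
  -- pointwise bound on q
  have hqle : ∀ θ, q θ ≤ (1 / 2) * (S θ - Δ + ∑ θ', β₀ θ θ' * q θ') := by
    intro θ
    have hle : (𝓜.inf' h𝓜 fun β => ∑ θ', β θ θ' * q θ') ≤ ∑ θ', β₀ θ θ' * q θ' :=
      Finset.inf'_le _ hβ₀
    rw [hq θ]
    nlinarith [hle]
  -- averaged bound
  have hsum : ∑ θ, μ θ * q θ ≤
      ∑ θ, μ θ * ((1 / 2) * (S θ - Δ + ∑ θ', β₀ θ θ' * q θ')) := by
    apply Finset.sum_le_sum
    intro θ _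
    exact mul_le_mul_of_nonneg_left (hqle θ) (hμ0 θ)
  have hswap : ∑ θ, μ θ * ∑ θ', β₀ θ θ' * q θ' = ∑ θ, μ θ * q θ := by
    calc ∑ θ, μ θ * ∑ θ', β₀ θ θ' * q θ'
        = ∑ θ, ∑ θ', μ θ * β₀ θ θ' * q θ' := by
          congr 1; ext θ; rw [Finset.mul_sum]; congr 1; ext θ'; ring
      _ = ∑ θ', ∑ θ, μ θ * β₀ θ θ' * q θ' := Finset.sum_comm
      _ = ∑ θ', (∑ θ, μ θ * β₀ θ θ') * q θ' := by
          congr 1; ext θ'; rw [Finset.sum_mul]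
      _ = ∑ θ', μ θ' * q θ' := by
          congr 1; ext θ'; rw [hinv' θ']
  have hexp : ∑ θ, μ θ * ((1 / 2) * (S θ - Δ + ∑ θ', β₀ θ θ' * q θ'))
      = (1 / 2) * (∑ θ, μ θ * S θ - Δ + ∑ θ, μ θ * q θ) := by
    have : ∀ θ, μ θ * ((1 / 2) * (S θ - Δ + ∑ θ', β₀ θ θ' * q θ'))
        = (1/2) * (μ θ * S θ) - (1/2) * Δ * μ θ
          + (1/2) * (μ θ * ∑ θ', β₀ θ θ' * q θ') := by intro θ; ring
    rw [Finset.sum_congr rfl (fun θ _ => this θ)]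
    rw [Finset.sum_add_distrib, Finset.sum_sub_distrib, ← Finset.mul_sum,
      ← Finset.mul_sum, ← Finset.mul_sum, hswap, hμ1]
    ring
  have hQ : ∑ θ, μ θ * q θ ≤ ∑ θ, μ θ * S θ - Δ := by
    rw [hexp] at hsum; linarith
  have hH : ∑ θ, μ θ * h θ = ∑ θ, μ θ * S θ + c - 2 * ∑ θ, μ θ * q θ := by
    have : ∀ θ, μ θ * h θ = μ θ * S θ + c * μ θ - 2 * (μ θ * q θ) := by
      intro θ; rw [hh θ]; ring
    rw [Finset.sum_congr rfl (fun θ _ => this θ), Finset.sum_sub_distrib,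
      Finset.sum_add_distrib, ← Finset.mul_sum, ← Finset.mul_sum, hμ1]
    ring
  rw [hH, hv]; linarith
end

section
/- Suppose the identity kernel belongs to 𝓜, let q̄ : Θ → ℝ solve the Bellman equation, fix c ∈ ℝ, set v* = c + Δ, and define h(θ) = S(θ) + c − 2·q̄(θ). Then for every state θ, 2·v* − c − max_{θ'} S(θ') ≤ h(θ) ≤ 2·v* − c − min_{θ'} S(θ'). Moreover, for any state θ₀ with S(θ₀) = min_{θ'} S(θ'), one has q̄(θ₀) = min_{θ'} S(θ') − Δ and h(θ₀) = 2·v* − c − min_{θ'} S(θ'). -/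
/-- When a rational type is present, equilibrium headline prices satisfy
`2v* − c − max S ≤ h(θ) ≤ 2v* − c − min S`; moreover, at any state where `S`
attains its minimum, `q̄ = min S − Δ` and the upper price bound binds. -/
theorem bellman_price_range {Θ : Type*} [Fintype Θ] [Nonempty Θ] [DecidableEq Θ]
    (𝓜 : Finset (Θ → Θ → ℝ)) (h𝓜 : 𝓜.Nonempty)
    (hker : ∀ β ∈ 𝓜, (∀ θ θ', 0 ≤ β θ θ') ∧ ∀ θ, ∑ θ', β θ θ' = 1)
    (hid : (fun θ θ' => if θ = θ' then (1 : ℝ) else 0) ∈ 𝓜)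
    (S : Θ → ℝ) (Δ c vstar : ℝ) (hv : vstar = c + Δ)
    (q : Θ → ℝ)
    (hq : ∀ θ, q θ =
      (1 / 2) * (S θ - Δ + 𝓜.inf' h𝓜 fun β => ∑ θ', β θ θ' * q θ'))
    (h : Θ → ℝ) (hh : ∀ θ, h θ = S θ + c - 2 * q θ) :
    (∀ θ, 2 * vstar - c - Finset.univ.sup' Finset.univ_nonempty S ≤ h θ ∧
      h θ ≤ 2 * vstar - c - Finset.univ.inf' Finset.univ_nonempty S) ∧
    (∀ θ₀, S θ₀ = Finset.univ.inf' Finset.univ_nonempty S →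
      q θ₀ = Finset.univ.inf' Finset.univ_nonempty S - Δ ∧
      h θ₀ = 2 * vstar - c - Finset.univ.inf' Finset.univ_nonempty S) := by
  classical
  set m := Finset.univ.inf' Finset.univ_nonempty S with hm
  set M := Finset.univ.sup' Finset.univ_nonempty S with hM
  set qmin := Finset.univ.inf' Finset.univ_nonempty q with hqmin
  set I : Θ → ℝ := fun θ => 𝓜.inf' h𝓜 fun β => ∑ θ', β θ θ' * q θ' with hI
  have hIle : ∀ θ, I θ ≤ q θ := by
    intro θ
    have h1 : (∑ θ', (if θ = θ' then (1 : ℝ) else 0) * q θ') = q θ := by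
      simp [ite_mul]
    have := Finset.inf'_le (s := 𝓜) (fun β => ∑ θ', β θ θ' * q θ') hid
    exact this.trans_eq h1
  have hIge : ∀ θ, qmin ≤ I θ := by
    intro θ
    apply Finset.le_inf'
    intro β hβ
    have hnn := (hker β hβ).1
    have hsum := (hker β hβ).2 θ
    calc qmin = ∑ θ', β θ θ' * qmin := by
          rw [← Finset.sum_mul, hsum, one_mul]
      _ ≤ ∑ θ', β θ θ' * q θ' := by
          apply Finset.sum_le_sum
          intro θ' _
          exact mul_le_mul_of_nonneg_left
            (Finset.inf'_le q (Finset.mem_univ θ')) (hnn θ θ')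
  have hmle : ∀ θ, m ≤ S θ := fun θ => Finset.inf'_le S (Finset.mem_univ θ)
  have hMge : ∀ θ, S θ ≤ M := fun θ => Finset.le_sup' S (Finset.mem_univ θ)
  have hqminlb : m - Δ ≤ qmin := by
    obtain ⟨θs, _, hθs⟩ := Finset.exists_mem_eq_inf' Finset.univ_nonempty q
    have h1 : q θs = 1 / 2 * (S θs - Δ + I θs) := hq θs
    have h2 := hIge θs
    have h3 := hmle θs
    rw [← hqmin] at hθs
    linarith [hθs ▸ h1]
  constructor
  · intro θ
    have h1 : q θ = 1 / 2 * (S θ - Δ + I θ) := hq θ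
    have h2 := hIle θ
    have h3 := hIge θ
    have h4 := hmle θ
    have h5 := hMge θ
    have h6 := hh θ
    constructor <;> [skip; skip] <;> linarith
  · intro θ₀ hθ₀
    have h1 : q θ₀ = 1 / 2 * (S θ₀ - Δ + I θ₀) := hq θ₀
    have h2 := hIle θ₀
    have h3 := hIge θ₀
    have h6 := hh θ₀
    have hq0 : q θ₀ = m - Δ := by linarith [hθ₀ ▸ h1]
    exact ⟨hq0, by rw [h6, hq0, hθ₀, hv]; ring⟩
end

section
/- Let μ be a probability vector on Θ and suppose 𝓜 = {β} where β is the fully coarse kernel β θ θ' = μ(θ') for all θ, θ'. Then the unique solution of the Bellman equation is q̄(θ) = (1/2)·(S(θ) + S̄) − Δ, where S̄ = ∑_{θ'} μ(θ')·S(θ'); consequently, for any c ∈ ℝ and v* = c + Δ, the headline price h(θ) = S(θ) + c − 2·q̄(θ) is constant across states and equals v* + Δ − S̄. -/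
/-- With a single fully coarse cognitive type (the kernel `β θ θ' = μ θ'`), the
unique Bellman solution is `q̄(θ) = (1/2)·(S(θ) + S̄) − Δ`, and the headline
price is constant across states and equals `v* + Δ − S̄` (with `v* = c + Δ`). -/
theorem bellman_fully_coarse_solution {Θ : Type*} [Fintype Θ] [Nonempty Θ]
    (μ : Θ → ℝ) (hμ0 : ∀ θ, 0 ≤ μ θ) (hμ1 : ∑ θ, μ θ = 1)
    (β : Θ → Θ → ℝ) (hβ : ∀ θ θ', β θ θ' = μ θ')
    (𝓜 : Finset (Θ → Θ → ℝ)) (h𝓜 : 𝓜.Nonempty) (hM : 𝓜 = {β})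
    (S : Θ → ℝ) (Δ c : ℝ)
    (Sbar : ℝ) (hSbar : Sbar = ∑ θ', μ θ' * S θ') :
    (∀ q : Θ → ℝ,
      (∀ θ, q θ =
        (1 / 2) * (S θ - Δ + 𝓜.inf' h𝓜 fun b => ∑ θ', b θ θ' * q θ')) ↔
      (∀ θ, q θ = (1 / 2) * (S θ + Sbar) - Δ)) ∧
    (∀ q : Θ → ℝ,
      (∀ θ, q θ =
        (1 / 2) * (S θ - Δ + 𝓜.inf' h𝓜 fun b => ∑ θ', b θ θ' * q θ')) →
      ∀ θ, S θ + c - 2 * q θ = (c + Δ) + Δ - Sbar) := by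
  subst hM
  have hinf : ∀ (q : Θ → ℝ) (θ : Θ),
      ({β} : Finset (Θ → Θ → ℝ)).inf' h𝓜 (fun b => ∑ θ', b θ θ' * q θ')
        = ∑ θ', μ θ' * q θ' := by
    intro q θ
    rw [Finset.inf'_singleton]
    exact Finset.sum_congr rfl fun θ' _ => by rw [hβ]
  have key : ∀ q : Θ → ℝ,
      (∀ θ, q θ = (1 / 2) * (S θ - Δ +
        ({β} : Finset (Θ → Θ → ℝ)).inf' h𝓜 fun b => ∑ θ', b θ θ' * q θ')) ↔
      (∀ θ, q θ = (1 / 2) * (S θ + Sbar) - Δ) := by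
    intro q
    constructor
    · intro h
      set Q := ∑ θ', μ θ' * q θ' with hQ
      have h' : ∀ θ, q θ = (1 / 2) * (S θ - Δ + Q) := fun θ => by
        rw [h θ, hinf q θ]
      have hQeq : Q = (1 / 2) * (Sbar - Δ + Q) := by
        calc Q = ∑ θ', μ θ' * ((1 / 2) * (S θ' - Δ + Q)) :=
              Finset.sum_congr rfl fun θ' _ => by rw [h' θ']
          _ = (1 / 2) * ((∑ θ', μ θ' * S θ') - Δ * (∑ θ', μ θ') + Q * (∑ θ', μ θ')) := by
              simp only [Finset.mul_sum, ← Finset.sum_sub_distrib, ← Finset.sum_add_distrib]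
              exact Finset.sum_congr rfl fun θ' _ => by ring
          _ = (1 / 2) * (Sbar - Δ + Q) := by rw [hμ1, hSbar]; ring
      have hQval : Q = Sbar - Δ := by linarith
      intro θ; rw [h' θ, hQval]; ring
    · intro h θ
      rw [hinf q θ]
      have : ∑ θ', μ θ' * q θ' = Sbar - Δ := by
        calc ∑ θ', μ θ' * q θ'
            = ∑ θ', μ θ' * ((1 / 2) * (S θ' + Sbar) - Δ) :=
              Finset.sum_congr rfl fun θ' _ => by rw [h θ']
          _ = (1 / 2) * ((∑ θ', μ θ' * S θ') + Sbar * (∑ θ', μ θ')) - Δ * (∑ θ', μ θ') := by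
              simp only [Finset.mul_sum, ← Finset.sum_add_distrib, ← Finset.sum_sub_distrib]
              exact Finset.sum_congr rfl fun θ' _ => by ring
          _ = Sbar - Δ := by rw [hμ1, hSbar]; ring
      rw [h θ, this]; ring
  refine ⟨key, fun q hq θ => ?_⟩
  rw [(key q).mp hq θ]; ring
end

section
/- Let Θ = {θ₀, θ₁, θ₂} consist of three states (interpreted as (0,0), (0,1), (1,0)), let μ be uniform on Θ, let s₀ = S(θ₀) and s = S(θ₁) = S(θ₂) with s₀ < s, and let 𝓜 consist of the four kernels: the identity kernel; β₁ which from θ₀ and from θ₁ puts weight 1/2 on each of θ₀ and θ₁ and from θ₂ puts weight 1 on θ₂; β₂ which from θ₀ and from θ₂ puts weight 1/2 on each of θ₀ and θ₂ and from θ₁ puts weight 1 on θ₁; and β_∅ which from every state puts weight 1/3 on each state. Then the unique solution of the Bellman equation is q̄(θ₀) = s₀ − Δ and q̄(θ₁) = q̄(θ₂) = (2s + s₀)/3 − Δ. -/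
set_option maxHeartbeats 1000000


/-- The two-state-variable example: with states `{θ₀, θ₁, θ₂}` (i.e. `(0,0)`,
`(0,1)`, `(1,0)`), `S(θ₀) = s₀ < s = S(θ₁) = S(θ₂)`, and the four cognitive
types (rational, the two partially coarse types, and the fully coarse type),
the unique solution of the Bellman equation is `q̄(θ₀) = s₀ − Δ` and
`q̄(θ₁) = q̄(θ₂) = (2s + s₀)/3 − Δ`. -/
theorem bellman_example_two_state_variables
    (s₀ s Δ : ℝ) (hlt : s₀ < s)
    (S : Fin 3 → ℝ) (hS0 : S 0 = s₀) (hS1 : S 1 = s) (hS2 : S 2 = s)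
    (βid β₁ β₂ βe : Fin 3 → Fin 3 → ℝ)
    (hβid : βid = fun θ θ' => if θ = θ' then (1 : ℝ) else 0)
    (hβ₁ : β₁ = ![![1/2, 1/2, 0], ![1/2, 1/2, 0], ![0, 0, 1]])
    (hβ₂ : β₂ = ![![1/2, 0, 1/2], ![0, 1, 0], ![1/2, 0, 1/2]])
    (hβe : βe = fun _ _ => (1 : ℝ) / 3)
    (𝓜 : Finset (Fin 3 → Fin 3 → ℝ)) (h𝓜 : 𝓜.Nonempty)
    (hmem : ∀ β, β ∈ 𝓜 ↔ β = βid ∨ β = β₁ ∨ β = β₂ ∨ β = βe) :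
    ∀ q : Fin 3 → ℝ,
      (∀ θ, q θ =
        (1 / 2) * (S θ - Δ + 𝓜.inf' h𝓜 fun β => ∑ θ', β θ θ' * q θ')) ↔
      (q 0 = s₀ - Δ ∧ q 1 = (2 * s + s₀) / 3 - Δ ∧ q 2 = (2 * s + s₀) / 3 - Δ) := by
  have hinf : ∀ f : (Fin 3 → Fin 3 → ℝ) → ℝ,
      𝓜.inf' h𝓜 f = min (f βid) (min (f β₁) (min (f β₂) (f βe))) := by
    intro f
    apply le_antisymm
    · exact le_min (Finset.inf'_le _ ((hmem βid).2 (Or.inl rfl)))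
        (le_min (Finset.inf'_le _ ((hmem β₁).2 (Or.inr (Or.inl rfl))))
          (le_min (Finset.inf'_le _ ((hmem β₂).2 (Or.inr (Or.inr (Or.inl rfl)))))
            (Finset.inf'_le _ ((hmem βe).2 (Or.inr (Or.inr (Or.inr rfl)))))))
    · apply Finset.le_inf'
      intro b hb
      rcases (hmem b).1 hb with rfl | rfl | rfl | rfl
      · exact min_le_left _ _
      · exact le_trans (min_le_right _ _) (min_le_left _ _)
      · exact le_trans (min_le_right _ _) (le_trans (min_le_right _ _) (min_le_left _ _))
      · exact le_trans (min_le_right _ _) (le_trans (min_le_right _ _) (min_le_right _ _))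
  intro q
  have hsum0 : ∀ θ : Fin 3, (∑ θ', βid θ θ' * q θ') = q θ := by
    subst hβid; intro θ; fin_cases θ <;> simp [Fin.sum_univ_three]
  have hsum1 : (∑ θ', β₁ 0 θ' * q θ') = (q 0 + q 1)/2 ∧
      (∑ θ', β₁ 1 θ' * q θ') = (q 0 + q 1)/2 ∧ (∑ θ', β₁ 2 θ' * q θ') = q 2 := by
    subst hβ₁; refine ⟨?_, ?_, ?_⟩ <;> simp [Fin.sum_univ_three] <;> ring
  have hsum2 : (∑ θ', β₂ 0 θ' * q θ') = (q 0 + q 2)/2 ∧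
      (∑ θ', β₂ 1 θ' * q θ') = q 1 ∧ (∑ θ', β₂ 2 θ' * q θ') = (q 0 + q 2)/2 := by
    subst hβ₂; refine ⟨?_, ?_, ?_⟩ <;> simp [Fin.sum_univ_three] <;> ring
  have hsume : ∀ θ : Fin 3, (∑ θ', βe θ θ' * q θ') = (q 0 + q 1 + q 2)/3 := by
    subst hβe; intro θ; simp [Fin.sum_univ_three]; ring
  constructor
  · intro H
    have h0 := H 0
    have h1 := H 1
    have h2 := H 2
    rw [hinf] at h0 h1 h2
    rw [hsum0, hsum1.1, hsum2.1, hsume, hS0] at h0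
    rw [hsum0, hsum1.2.1, hsum2.2.1, hsume, hS1] at h1
    rw [hsum0, hsum1.2.2, hsum2.2.2, hsume, hS2] at h2

    -- upper bounds
    have u0 : min (q 0) (min ((q 0 + q 1)/2) (min ((q 0 + q 2)/2) ((q 0 + q 1 + q 2)/3))) ≤ q 0 :=
      min_le_left _ _
    have u1 : min (q 1) (min ((q 0 + q 1)/2) (min (q 1) ((q 0 + q 1 + q 2)/3))) ≤ (q 0 + q 1)/2 :=
      le_trans (min_le_right _ _) (min_le_left _ _)
    have u2 : min (q 2) (min (q 2) (min ((q 0 + q 2)/2) ((q 0 + q 1 + q 2)/3))) ≤ (q 0 + q 2)/2 :=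
      le_trans (min_le_right _ _) (le_trans (min_le_right _ _) (min_le_left _ _))
    have hA : q 0 ≤ s₀ - Δ := by linarith
    have hB : 3 * q 1 ≤ 2*s - 2*Δ + q 0 := by linarith
    have hC : 3 * q 2 ≤ 2*s - 2*Δ + q 0 := by linarith
    -- step 1 : q 0 = s₀ - Δ and q 0 ≤ q 1, q 0 ≤ q 2
    have step1 : q 0 = s₀ - Δ ∧ q 0 ≤ q 1 ∧ q 0 ≤ q 2 := by
      rcases le_total (q 0) (q 1) with h01 | h01
      · rcases le_total (q 0) (q 2) with h02 | h02
        · have g0 : q 0 ≤ min (q 0) (min ((q 0 + q 1)/2) (min ((q 0 + q 2)/2) ((q 0 + q 1 + q 2)/3))) :=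
            le_min le_rfl (le_min (by linarith) (le_min (by linarith) (by linarith)))
          exact ⟨by linarith, h01, h02⟩
        · -- q 2 ≤ q 0 ≤ q 1 : contradiction
          have g2 : q 2 ≤ min (q 2) (min (q 2) (min ((q 0 + q 2)/2) ((q 0 + q 1 + q 2)/3))) :=
            le_min le_rfl (le_min le_rfl (le_min (by linarith) (by linarith)))
          exact ⟨by linarith, by linarith, by linarith⟩
      · rcases le_total (q 1) (q 2) with h12 | h12
        · -- q 1 ≤ q 0, q 1 ≤ q 2 : contradiction
          have g1 : q 1 ≤ min (q 1) (min ((q 0 + q 1)/2) (min (q 1) ((q 0 + q 1 + q 2)/3))) :=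
            le_min le_rfl (le_min (by linarith) (le_min le_rfl (by linarith)))
          exact ⟨by linarith, by linarith, by linarith⟩
        · -- q 2 ≤ q 1 ≤ q 0 : contradiction
          have g2 : q 2 ≤ min (q 2) (min (q 2) (min ((q 0 + q 2)/2) ((q 0 + q 1 + q 2)/3))) :=
            le_min le_rfl (le_min le_rfl (le_min (by linarith) (by linarith)))
          exact ⟨by linarith, by linarith, by linarith⟩
    obtain ⟨ha0, hab, hac⟩ := step1
    rcases le_total (q 1) (q 2) with h12 | h12
    · have g1 : (q 0 + q 1)/2 ≤ min (q 1) (min ((q 0 + q 1)/2) (min (q 1) ((q 0 + q 1 + q 2)/3))) :=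
        le_min (by linarith) (le_min le_rfl (le_min (by linarith) (by linarith)))
      exact ⟨ha0, by linarith, by linarith⟩
    · have g2 : (q 0 + q 2)/2 ≤ min (q 2) (min (q 2) (min ((q 0 + q 2)/2) ((q 0 + q 1 + q 2)/3))) :=
        le_min (by linarith) (le_min (by linarith) (le_min le_rfl (by linarith)))
      exact ⟨ha0, by linarith, by linarith⟩
  · rintro ⟨e0, e1, e2⟩ θ
    rw [hinf]
    have key : θ = 0 ∨ θ = 1 ∨ θ = 2 := by omega
    rcases key with rfl | rfl | rfl
    · rw [hsum0, hsum1.1, hsum2.1, hsume, hS0, e0, e1, e2]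
      simp only [min_def]
      split_ifs <;> linarith
    · rw [hsum0, hsum1.2.1, hsum2.2.1, hsume, hS1, e0, e1, e2]
      simp only [min_def]
      split_ifs <;> linarith
    · rw [hsum0, hsum1.2.2, hsum2.2.2, hsume, hS2, e0, e1, e2]
      simp only [min_def]
      split_ifs <;> linarith
end

section
/- For every Δ > 0, every S̄ with 2Δ < S̄ < 4Δ, and every ε > 0, there exist a nonempty finite set Θ, a probability vector μ on Θ with μ(θ) > 0 for all θ, a function S : Θ → ℝ with ∑_θ μ(θ)·S(θ) = S̄, and a nonempty finite set 𝓜 of transition kernels on Θ each of which leaves μ invariant, such that the unique solution q̄ of the Bellman equation satisfies (1/2)·S(θ) < q̄(θ) < S(θ) for every θ (interiority) and ∑_θ μ(θ)·q̄(θ) < (1/2)·S̄ + ε. That is, the lower bound (1/2)·S̄ on the expected add-on can be approximated arbitrarily well in interior equilibrium. -/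
private lemma inf'_pair_min {α : Type*} [DecidableEq α] (a b : α) (f : α → ℝ)
    (H : ({a, b} : Finset α).Nonempty) :
    ({a, b} : Finset α).inf' H f = min (f a) (f b) := by
  simp [min_def]

set_option maxHeartbeats 1600000 in
/-- The lower bound `(1/2)·S̄` on the expected add-on can be approximated
arbitrarily well in interior equilibrium: for every `Δ > 0`, every `S̄` with
`2Δ < S̄ < 4Δ`, and every `ε > 0`, there are primitives (a nonempty finite
state space, a full-support probability vector `μ`, a function `S` averaging
to `S̄`, and a nonempty finite set of transition kernels each leaving `μ`
invariant), such that the solution `q̄` of the Bellman equation is interior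
and `∑ μ·q̄ < (1/2)·S̄ + ε`. -/
theorem bellman_expected_addon_lower_bound_approx
    (Δ : ℝ) (hΔ : 0 < Δ) (Sbar : ℝ) (h1 : 2 * Δ < Sbar) (h2 : Sbar < 4 * Δ)
    (ε : ℝ) (hε : 0 < ε) :
    ∃ (n : ℕ), 0 < n ∧
      ∃ (μ S : Fin n → ℝ) (𝓜 : Finset (Fin n → Fin n → ℝ)) (h𝓜 : 𝓜.Nonempty),
        (∀ θ, 0 < μ θ) ∧ (∑ θ, μ θ = 1) ∧
        (∑ θ, μ θ * S θ = Sbar) ∧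
        (∀ β ∈ 𝓜, (∀ θ θ', 0 ≤ β θ θ') ∧ (∀ θ, ∑ θ', β θ θ' = 1) ∧
          (∀ θ', ∑ θ, μ θ * β θ θ' = μ θ')) ∧
        ∃ q : Fin n → ℝ,
          (∀ θ, q θ =
            (1 / 2) * (S θ - Δ + 𝓜.inf' h𝓜 fun β => ∑ θ', β θ θ' * q θ')) ∧
          (∀ θ, (1 / 2) * S θ < q θ ∧ q θ < S θ) ∧
          ∑ θ, μ θ * q θ < (1 / 2) * Sbar + ε := by
  classical
  have hSb : 0 < Sbar := by linarith
  have hgap : 0 < Sbar - 2*Δ := by linarith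
  obtain ⟨d, hd_pos, hd1, hd2⟩ : ∃ d : ℝ, 0 < d ∧ 8*d ≤ ε ∧ 8*d ≤ Sbar - 2*Δ := by
    refine ⟨min ε (Sbar - 2*Δ) / 8, ?_, ?_, ?_⟩
    · have := lt_min hε hgap; linarith
    · have := min_le_left ε (Sbar - 2*Δ); linarith
    · have := min_le_right ε (Sbar - 2*Δ); linarith
  obtain ⟨p, hp_pos, hp1, hp2, hp3⟩ :
      ∃ p : ℝ, 0 < p ∧ 8*p ≤ 1 ∧ 8*p*Δ ≤ ε ∧ 8*p*(Sbar + 2*Δ) ≤ Sbar - 2*Δ := by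
    have hεΔ : 0 < ε/Δ := div_pos hε hΔ
    have hrat : 0 < (Sbar - 2*Δ)/(Sbar + 2*Δ) := div_pos hgap (by linarith)
    refine ⟨min 1 (min (ε/Δ) ((Sbar - 2*Δ)/(Sbar + 2*Δ))) / 8, ?_, ?_, ?_, ?_⟩
    · have := lt_min one_pos (lt_min hεΔ hrat); linarith
    · have := min_le_left 1 (min (ε/Δ) ((Sbar - 2*Δ)/(Sbar + 2*Δ))); linarith
    · have h8 : min 1 (min (ε/Δ) ((Sbar - 2*Δ)/(Sbar + 2*Δ))) ≤ ε/Δ :=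
        (min_le_right _ _).trans (min_le_left _ _)
      calc 8*(min 1 (min (ε/Δ) ((Sbar - 2*Δ)/(Sbar + 2*Δ))) / 8)*Δ ≤ (ε/Δ)*Δ := by nlinarith
      _ = ε := by field_simp
    · have h8 : min 1 (min (ε/Δ) ((Sbar - 2*Δ)/(Sbar + 2*Δ))) ≤ (Sbar - 2*Δ)/(Sbar + 2*Δ) :=
        (min_le_right _ _).trans (min_le_right _ _)
      calc 8*(min 1 (min (ε/Δ) ((Sbar - 2*Δ)/(Sbar + 2*Δ))) / 8)*(Sbar+2*Δ)
          ≤ ((Sbar - 2*Δ)/(Sbar + 2*Δ))*(Sbar+2*Δ) := by nlinarith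
      _ = Sbar - 2*Δ := by field_simp
  have hp_lt1 : p < 1 := by linarith
  have hp_ne : p ≠ 0 := ne_of_gt hp_pos
  have hD : (0:ℝ) < 1 - p/2 := by linarith
  obtain ⟨S1, hS1⟩ : ∃ S1 : ℝ, p * S1 = Sbar - (1-p)*(2*Δ+d) :=
    ⟨(Sbar - (1-p)*(2*Δ+d))/p, by field_simp⟩
  obtain ⟨E, hE⟩ : ∃ E : ℝ, E * (1 - p/2) = (1-p)*(Δ+d) + (p/2)*(S1-Δ) :=
    ⟨((1-p)*(Δ+d) + (p/2)*(S1-Δ))/(1 - p/2), div_mul_cancel₀ _ (ne_of_gt hD)⟩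
  have hE2 : E*(2-p) = (1-p)*d + Sbar - p*Δ := by linarith [hS1, hE]
  have h2p : (0:ℝ) < 2 - p := by linarith
  have hE_lb : Sbar/2 ≤ E := by
    nlinarith [hE2, mul_pos hp_pos hgap, mul_pos (sub_pos.mpr hp_lt1) hd_pos, h2p]
  have hE_ub : E ≤ Sbar/2 + ε/4 := by
    nlinarith [hE2, hd1, hp2, hp1, hd_pos, hp_pos, mul_pos hp_pos hd_pos,
      mul_nonneg hp_pos.le hε.le, h2p, mul_nonneg hp_pos.le hgap.le]
  have hE_ubΔ : E ≤ Sbar/2 + Δ := by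
    nlinarith [hE2, hd2, hp1, h2, hΔ, hd_pos, hp_pos, mul_pos hp_pos hd_pos,
      mul_nonneg hp_pos.le hgap.le, mul_nonneg hp_pos.le hΔ.le, h2p]
  have hq0E : Δ + d ≤ E := by linarith
  have hS1_lb : 7*(Sbar + 2*Δ) ≤ S1 := by
    nlinarith [hS1, hd2, hp3, hp_pos, mul_pos hp_pos hd_pos,
      mul_nonneg hp_pos.le (by linarith : (0:ℝ) ≤ 2*Δ + d)]
  have hEq1 : E ≤ S1 - Δ := by linarith
  have hμq : (1-p)*(Δ+d) + p*((S1-Δ+E)/2) = E := by linear_combination -hE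
  refine ⟨2, two_pos, ![1-p, p], ![2*Δ+d, S1],
    {![![(1:ℝ),0],![0,1]], ![![1-p,p],![1-p,p]]},
    Finset.insert_nonempty _ _, ?_, ?_, ?_, ?_, ?_⟩
  · intro θ; fin_cases θ <;> simp <;> linarith
  · simp [Fin.sum_univ_two]
  · simp [Fin.sum_univ_two]; linear_combination hS1
  · intro β hβ
    simp only [Finset.mem_insert, Finset.mem_singleton] at hβ
    rcases hβ with rfl | rfl
    · refine ⟨?_, ?_, ?_⟩
      · intro θ θ'; fin_cases θ <;> fin_cases θ' <;> norm_num
      · intro θ; fin_cases θ <;> simp [Fin.sum_univ_two]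
      · intro θ'; fin_cases θ' <;> simp [Fin.sum_univ_two]
    · refine ⟨?_, ?_, ?_⟩
      · intro θ θ'; fin_cases θ <;> fin_cases θ' <;> norm_num <;> linarith
      · intro θ; fin_cases θ <;> simp [Fin.sum_univ_two] <;> ring
      · intro θ'; fin_cases θ' <;> simp [Fin.sum_univ_two] <;> ring_nf <;> nlinarith [hp_pos]
  · refine ⟨![Δ+d, (S1-Δ+E)/2], ?_, ?_, ?_⟩
    · intro θ
      rw [inf'_pair_min]
      fin_cases θ
      · simp only [Fin.sum_univ_two, Matrix.cons_val_zero, Matrix.cons_val_one,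
          Matrix.head_cons, Fin.isValue, Fin.mk_zero, one_mul, zero_mul, add_zero]
        rw [hμq, inf_eq_left.mpr (by linarith : Δ + d ≤ E)]
        ring
      · simp only [Fin.sum_univ_two, Matrix.cons_val_zero, Matrix.cons_val_one,
          Matrix.head_cons, Fin.isValue, Fin.mk_one, one_mul, zero_mul, zero_add]
        rw [hμq, inf_eq_right.mpr (by linarith : E ≤ (S1-Δ+E)/2)]
        ring
    · intro θ
      fin_cases θ <;>
        simp only [Matrix.cons_val_zero, Matrix.cons_val_one, Matrix.head_cons,
          Fin.isValue, Fin.mk_zero, Fin.mk_one] <;>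
        constructor <;> nlinarith [hE_lb, hEq1, hΔ, hd_pos]
    · simp only [Fin.sum_univ_two, Matrix.cons_val_zero, Matrix.cons_val_one,
        Matrix.head_cons]
      nlinarith [hμq, hE_ub, hε]
end

section
/- There exists exactly one function q̄ : Θ → ℝ solving the mutually-beneficial Bellman equation, i.e. the map T sending q : Θ → ℝ to T q (θ) = (1/2)·(S(θ) − Δ − max_{β ∈ 𝓜} ∑_{θ'} β θ θ' · q(θ')) has a unique fixed point. -/
open Finset

lemma sup'_abs_sub_le {ι : Type*} (s : Finset ι) (hs : s.Nonempty)
    (A B : ι → ℝ) (C : ℝ) (h : ∀ i ∈ s, |A i - B i| ≤ C) :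
    |s.sup' hs A - s.sup' hs B| ≤ C := by
  rw [abs_sub_le_iff]
  constructor
  · rw [sub_le_iff_le_add]
    refine Finset.sup'_le _ _ fun i hi => ?_
    have := (abs_sub_le_iff.mp (h i hi)).1
    have hB := Finset.le_sup' B hi
    linarith
  · rw [sub_le_iff_le_add]
    refine Finset.sup'_le _ _ fun i hi => ?_
    have := (abs_sub_le_iff.mp (h i hi)).2
    have hA := Finset.le_sup' A hi
    linarith

/-- There exists exactly one function `q̄ : Θ → ℝ` solving the
mutually-beneficial Bellman equation (with a maximum and a minus sign). -/
theorem mb_bellman_unique_fixed_point {Θ : Type*} [Fintype Θ] [Nonempty Θ]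
    (𝓜 : Finset (Θ → Θ → ℝ)) (h𝓜 : 𝓜.Nonempty)
    (hker : ∀ β ∈ 𝓜, (∀ θ θ', 0 ≤ β θ θ') ∧ ∀ θ, ∑ θ', β θ θ' = 1)
    (S : Θ → ℝ) (Δ : ℝ) :
    ∃! q : Θ → ℝ, ∀ θ, q θ =
      (1 / 2) * (S θ - Δ - 𝓜.sup' h𝓜 fun β => ∑ θ', β θ θ' * q θ') := by
  set T : (Θ → ℝ) → (Θ → ℝ) := fun q θ =>
    (1 / 2) * (S θ - Δ - 𝓜.sup' h𝓜 fun β => ∑ θ', β θ θ' * q θ') with hTdef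
  have hT : ContractingWith (1 / 2 : NNReal) T := by
    constructor
    · rw [← NNReal.coe_lt_coe]; norm_num
    · rw [lipschitzWith_iff_dist_le_mul]
      intro q q'
      rw [dist_pi_le_iff (by positivity)]
      intro θ
      have key : ∀ β ∈ 𝓜,
          |(∑ θ', β θ θ' * q θ') - ∑ θ', β θ θ' * q' θ'| ≤ dist q q' := by
        intro β hβ
        obtain ⟨hpos, hsum⟩ := hker β hβ
        rw [← Finset.sum_sub_distrib]
        calc |∑ θ', (β θ θ' * q θ' - β θ θ' * q' θ')|
            ≤ ∑ θ', |β θ θ' * q θ' - β θ θ' * q' θ'| := Finset.abs_sum_le_sum_abs _ _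
          _ ≤ ∑ θ', β θ θ' * dist q q' := by
              refine Finset.sum_le_sum fun θ' _ => ?_
              rw [← mul_sub, abs_mul, abs_of_nonneg (hpos θ θ')]
              exact mul_le_mul_of_nonneg_left
                ((Real.dist_eq (q θ') (q' θ')).symm ▸ dist_le_pi_dist q q' θ') (hpos θ θ')
          _ = dist q q' := by rw [← Finset.sum_mul, hsum θ, one_mul]
      have hsup := sup'_abs_sub_le 𝓜 h𝓜 (fun β => ∑ θ', β θ θ' * q θ')
        (fun β => ∑ θ', β θ θ' * q' θ') (dist q q') key
      have : dist (T q θ) (T q' θ) ≤ (1 / 2) * dist q q' := by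
        rw [Real.dist_eq, hTdef]
        simp only
        rw [← mul_sub, abs_mul]
        have h12 : |(1 : ℝ) / 2| = 1 / 2 := by norm_num
        rw [h12]
        have hd : (S θ - Δ - 𝓜.sup' h𝓜 fun β => ∑ θ', β θ θ' * q θ') -
            (S θ - Δ - 𝓜.sup' h𝓜 fun β => ∑ θ', β θ θ' * q' θ') =
            -((𝓜.sup' h𝓜 fun β => ∑ θ', β θ θ' * q θ') -
              𝓜.sup' h𝓜 fun β => ∑ θ', β θ θ' * q' θ') := by ring
        rw [hd, abs_neg]
        exact mul_le_mul_of_nonneg_left hsup (by norm_num)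
      calc dist (T q θ) (T q' θ) ≤ (1 / 2) * dist q q' := this
        _ = ((1 / 2 : NNReal) : ℝ) * dist q q' := by norm_num
  refine ⟨hT.fixedPoint T, fun θ => ?_, fun y hy => ?_⟩
  · exact (congrFun (hT.fixedPoint_isFixedPt : T _ = _) θ).symm
  · exact hT.fixedPoint_unique (funext fun θ => (hy θ).symm)
end

section
/- Suppose the identity kernel belongs to 𝓜 and q̄ : Θ → ℝ solves the mutually-beneficial Bellman equation. Then for every state θ, the average quality is weakly below its rational-expectations level: q̄(θ) ≤ (S(θ) − Δ)/3; consequently, for any c ∈ ℝ, the headline price h(θ) = S(θ) + c − 2·q̄(θ) is weakly above its rational-expectations level: h(θ) ≥ S(θ) + c − (2/3)·(S(θ) − Δ). -/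
/-- In the mutually-beneficial variant, if the rational (identity) type is
present, the average quality is weakly below its rational-expectations level
`(S(θ) − Δ)/3`, and consequently the headline price `h(θ) = S(θ) + c − 2·q̄(θ)`
is weakly above its rational-expectations level. -/
theorem mb_bellman_quality_below_REE {Θ : Type*} [Fintype Θ] [Nonempty Θ]
    [DecidableEq Θ]
    (𝓜 : Finset (Θ → Θ → ℝ)) (h𝓜 : 𝓜.Nonempty)
    (hker : ∀ β ∈ 𝓜, (∀ θ θ', 0 ≤ β θ θ') ∧ ∀ θ, ∑ θ', β θ θ' = 1)
    (hid : (fun θ θ' => if θ = θ' then (1 : ℝ) else 0) ∈ 𝓜)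
    (S : Θ → ℝ) (Δ c : ℝ) (q : Θ → ℝ)
    (hq : ∀ θ, q θ =
      (1 / 2) * (S θ - Δ - 𝓜.sup' h𝓜 fun β => ∑ θ', β θ θ' * q θ')) :
    ∀ θ, q θ ≤ (S θ - Δ) / 3 ∧
      S θ + c - 2 * q θ ≥ S θ + c - (2 / 3) * (S θ - Δ) := by
  intro θ
  have hle : q θ ≤ 𝓜.sup' h𝓜 fun β => ∑ θ', β θ θ' * q θ' := by
    have := Finset.le_sup' (fun β => ∑ θ', β θ θ' * q θ') hid
    simpa [Finset.sum_ite_eq, Finset.mem_univ, -Finset.le_sup'_iff] using this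
  have h := hq θ
  constructor <;> linarith
end

section
/- Let Θ = {0, 1}, S(0) = k and S(1) = 1 with k < 1, and let Δ ∈ ℝ. Let β₀ be the fully coarse kernel putting weight 1/2 on each state from every state, and let β_id be the identity kernel. Then: (i) the unique solution of the mutually-beneficial Bellman equation for 𝓜 = {β₀} is q̄(0) = (5k − 4Δ − 1)/12 and q̄(1) = (5 − 4Δ − k)/12; (ii) the unique solution for 𝓜' = {β₀, β_id} is q̄'(0) = (6k − 5Δ − 1)/15 and q̄'(1) = (1 − Δ)/3; and (iii) q̄'(1) < q̄(1) while q̄'(0) > q̄(0), so adding the rational type strictly decreases expected quality in state 1 and strictly increases it in state 0. -/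
/-- The two-state mutually-beneficial example: with `S(0) = k < 1 = S(1)`,
(i) the unique solution for the fully coarse singleton `𝓜 = {β₀}` is
`q̄(0) = (5k − 4Δ − 1)/12`, `q̄(1) = (5 − 4Δ − k)/12`;
(ii) the unique solution for `𝓜' = {β₀, β_id}` is `q̄'(0) = (6k − 5Δ − 1)/15`,
`q̄'(1) = (1 − Δ)/3`; and
(iii) `q̄'(1) < q̄(1)` while `q̄'(0) > q̄(0)`: adding the rational type strictly
decreases expected quality in state 1 and strictly increases it in state 0. -/
theorem mb_bellman_two_state_example
    (k Δ : ℝ) (hk : k < 1)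
    (S : Fin 2 → ℝ) (hS0 : S 0 = k) (hS1 : S 1 = 1)
    (β₀ βid : Fin 2 → Fin 2 → ℝ)
    (hβ₀ : β₀ = fun _ _ => (1 : ℝ) / 2)
    (hβid : βid = fun θ θ' => if θ = θ' then (1 : ℝ) else 0)
    (𝓜 𝓜' : Finset (Fin 2 → Fin 2 → ℝ)) (h𝓜 : 𝓜.Nonempty) (h𝓜' : 𝓜'.Nonempty)
    (hmem : ∀ β, β ∈ 𝓜 ↔ β = β₀)
    (hmem' : ∀ β, β ∈ 𝓜' ↔ β = β₀ ∨ β = βid) :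
    (∀ q : Fin 2 → ℝ,
      (∀ θ, q θ =
        (1 / 2) * (S θ - Δ - 𝓜.sup' h𝓜 fun β => ∑ θ', β θ θ' * q θ')) ↔
      (q 0 = (5 * k - 4 * Δ - 1) / 12 ∧ q 1 = (5 - 4 * Δ - k) / 12)) ∧
    (∀ q : Fin 2 → ℝ,
      (∀ θ, q θ =
        (1 / 2) * (S θ - Δ - 𝓜'.sup' h𝓜' fun β => ∑ θ', β θ θ' * q θ')) ↔
      (q 0 = (6 * k - 5 * Δ - 1) / 15 ∧ q 1 = (1 - Δ) / 3)) ∧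
    ((1 - Δ) / 3 < (5 - 4 * Δ - k) / 12 ∧
      (6 * k - 5 * Δ - 1) / 15 > (5 * k - 4 * Δ - 1) / 12) := by

  subst hβ₀ hβid
  have h1 : 𝓜 = {(fun _ _ => (1:ℝ)/2)} := Finset.ext fun β => by simp [hmem]
  have h2 : 𝓜' = {(fun _ _ => (1:ℝ)/2), (fun θ θ' => if θ = θ' then (1:ℝ) else 0)} :=
    Finset.ext fun β => by simp [hmem']
  subst h1 h2
  refine ⟨fun q => ⟨fun h => ?_, fun h θ => ?_⟩, fun q => ⟨fun h => ?_, fun h θ => ?_⟩, by linarith, by linarith⟩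
  · have e0 := h 0
    have e1 := h 1
    simp [Finset.sup'_singleton, Fin.sum_univ_two, hS0, hS1] at e0 e1
    constructor <;> linarith
  · fin_cases θ <;>
      simp [Finset.sup'_singleton, Fin.sum_univ_two, hS0, hS1, h.1, h.2] <;> ring
  · have e0 := h 0
    have e1 := h 1
    simp [Finset.sup'_insert, Finset.sup'_singleton, Fin.sum_univ_two, hS0, hS1] at e0 e1
    rcases le_total (q 0) ((2:ℝ)⁻¹ * q 0 + 2⁻¹ * q 1) with h0 | h0 <;>
      rcases le_total (q 1) ((2:ℝ)⁻¹ * q 0 + 2⁻¹ * q 1) with h1 | h1 <;>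
      [rw [sup_eq_left.mpr h0] at e0; rw [sup_eq_left.mpr h0] at e0;
       rw [sup_eq_right.mpr h0] at e0; rw [sup_eq_right.mpr h0] at e0] <;>
      [rw [sup_eq_left.mpr h1] at e1; rw [sup_eq_right.mpr h1] at e1;
       rw [sup_eq_left.mpr h1] at e1; rw [sup_eq_right.mpr h1] at e1] <;>
      constructor <;> linarith
  · have hq0 : q 0 = (6 * k - 5 * Δ - 1) / 15 := h.1
    have hq1 : q 1 = (1 - Δ) / 3 := h.2
    fin_cases θ
    · simp [Finset.sup'_insert, Finset.sup'_singleton, Fin.sum_univ_two, hS0, hS1]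
      rw [sup_eq_left.mpr (show q 0 ≤ (2:ℝ)⁻¹ * q 0 + 2⁻¹ * q 1 by rw [hq0, hq1]; nlinarith),
        hq0, hq1]
      ring
    · simp [Finset.sup'_insert, Finset.sup'_singleton, Fin.sum_univ_two, hS0, hS1]
      rw [sup_eq_right.mpr (show (2:ℝ)⁻¹ * q 0 + 2⁻¹ * q 1 ≤ q 1 by rw [hq0, hq1]; nlinarith),
        hq1]
      ring
end
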